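/- arXiv:1501.01889 — 6 statements merged into one kernel-verified Lean document; each statement's English description precedes it below -/
import Mathlib

section
/- Let β ∈ ℂ with Re β > 0 and α ∈ ℂ with −1 < Re α < 0. Then g ↦ (e^{−βg} − e^{−g}) g^{α−1} is integrable on (0,∞) and ∫₀^∞ (e^{−βg} − e^{−g}) g^{α−1} dg = Γ(α) (β^{−α} − 1), where β^{−α} := exp(−α Log β) with Log the principal branch of the complex logarithm. (This extends the Mellin transform of the exponential to the strip ⟨−1,∞⟩ by subtracting e^{−g}.) -/
/-!
For `Re z > 0` and `Re s > 0`, `∫₀^∞ e^{-zg} g^{s-1} dg = z^{-s} Γ(s)`: both sides are holomorphic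
in `z` on the right half-plane and agree on the positive reals by scaling.

For `-1 < Re α < 0` neither `e^{-βg} g^{α-1}` nor `e^{-γg} g^{α-1}` is integrable at `0`, but
their difference is: by the mean value theorem `|e^{-βg} - e^{-γg}| ≤ |β - γ| g e^{-cg}` with
`c = min (Re β) (Re γ)`.
The boundary term `(e^{-βg} - e^{-γg}) g^α` vanishes at `0` and at `∞`, so integrating its
derivative by parts trades the integral of the difference for integrals of
`e^{-βg} g^α` and `e^{-γg} g^α`, to which the first formula applies; `Γ(α + 1) = α Γ(α)`
then gives `Γ(α) (β^{-α} - γ^{-α})`; take `γ = 1`.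
-/

open MeasureTheory Set Filter Topology Complex

lemma norm_cexp_neg_mul_ofReal (z : ℂ) (g : ℝ) : ‖cexp (-z * g)‖ = Real.exp (-z.re * g) := by
  simp [Complex.norm_exp]

lemma aestronglyMeasurable_mul_ofReal_cpow {F : ℝ → ℂ} (hF : Continuous F) (s : ℂ) :
    AEStronglyMeasurable (fun g : ℝ => F g * (g : ℂ) ^ s) (volume.restrict (Ioi 0)) :=
  (hF.continuousOn.mul fun g hg => (continuousAt_ofReal_cpow_const g s
    (.inr (ne_of_gt hg))).continuousWithinAt).aestronglyMeasurable measurableSet_Ioi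

lemma integrableOn_rpow_mul_exp_neg_mul {t b : ℝ} (ht : -1 < t) (hb : 0 < b) :
    IntegrableOn (fun g : ℝ => g ^ t * Real.exp (-b * g)) (Ioi 0) := by
  simpa using integrableOn_rpow_mul_exp_neg_mul_rpow ht one_pos hb

lemma integrableOn_cexp_neg_mul_mul_cpow {z s : ℂ} (hz : 0 < z.re) (hs : -1 < s.re) :
    IntegrableOn (fun g : ℝ => cexp (-z * g) * (g : ℂ) ^ s) (Ioi 0) := by
  refine (integrableOn_rpow_mul_exp_neg_mul hs hz).mono'
    (aestronglyMeasurable_mul_ofReal_cpow (by fun_prop) s) ?_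
  filter_upwards [self_mem_ae_restrict measurableSet_Ioi] with g hg
  rw [norm_mul, norm_cexp_neg_mul_ofReal, norm_cpow_eq_rpow_re_of_pos hg, mul_comm]

lemma norm_cexp_neg_mul_sub_le {z w : ℂ} {c : ℝ} (hz : c ≤ z.re) (hw : c ≤ w.re) {g : ℝ}
    (hg : 0 ≤ g) : ‖cexp (-z * g) - cexp (-w * g)‖ ≤ g * Real.exp (-c * g) * ‖z - w‖ := by
  refine (convex_halfSpace_re_ge c).norm_image_sub_le_of_norm_hasDerivWithin_le
    (f := fun u : ℂ => cexp (-u * g)) (f' := fun u => cexp (-u * g) * (-g))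
    (fun u _ => ?_) (fun u hu => ?_) hw hz
  · simpa using ((hasDerivAt_id u).neg.mul_const (g : ℂ)).cexp.hasDerivWithinAt
  · rw [norm_mul, norm_neg, norm_cexp_neg_mul_ofReal, Complex.norm_real, Real.norm_of_nonneg hg,
      mul_comm]
    gcongr
    exact hu

lemma differentiableAt_integral_cexp_neg_mul_mul_cpow {z s : ℂ} (hz : 0 < z.re)
    (hs : -1 < s.re) :
    DifferentiableAt ℂ (fun w : ℂ => ∫ g in Ioi (0 : ℝ), cexp (-w * g) * (g : ℂ) ^ s) z := by
  set ε := z.re / 2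
  have hε : 0 < ε := by positivity
  refine (hasDerivAt_integral_of_dominated_loc_of_deriv_le
    (F := fun w (g : ℝ) => cexp (-w * g) * (g : ℂ) ^ s)
    (F' := fun w (g : ℝ) => cexp (-w * g) * -g * (g : ℂ) ^ s)
    (bound := fun g : ℝ => g ^ (s.re + 1) * Real.exp (-ε * g))
    ((isOpen_lt continuous_const continuous_re).mem_nhds (half_lt_self hz))
    (Eventually.of_forall fun w => aestronglyMeasurable_mul_ofReal_cpow (by fun_prop) s)
    (integrableOn_cexp_neg_mul_mul_cpow hz hs)
    (aestronglyMeasurable_mul_ofReal_cpow (by fun_prop) s) ?_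
    (integrableOn_rpow_mul_exp_neg_mul (by linarith) hε) ?_).2.differentiableAt
  · filter_upwards [self_mem_ae_restrict measurableSet_Ioi] with g (hg : 0 < g) w (hw : ε < w.re)
    calc _ = g ^ (s.re + 1) * Real.exp (-w.re * g) := by
          rw [norm_mul, norm_mul, norm_neg, norm_cexp_neg_mul_ofReal, Complex.norm_real,
            Real.norm_of_nonneg hg.le, norm_cpow_eq_rpow_re_of_pos hg, Real.rpow_add_one hg.ne']
          ring
      _ ≤ _ := by gcongr
  · refine ae_of_all _ fun g w _ => ?_
    simpa using ((hasDerivAt_id w).neg.mul_const (g : ℂ)).cexp.mul_const ((g : ℂ) ^ s)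

lemma eqOn_re_pos_of_forall_ofReal_eq {f g : ℂ → ℂ} (hf : DifferentiableOn ℂ f {z | 0 < z.re})
    (hg : DifferentiableOn ℂ g {z | 0 < z.re}) (hfg : ∀ r : ℝ, 0 < r → f r = g r) :
    EqOn f g {z | 0 < z.re} := by
  have hU : IsOpen {z : ℂ | 0 < z.re} := isOpen_lt continuous_const continuous_re
  refine (hf.analyticOnNhd hU).eqOn_of_preconnected_of_frequently_eq (hg.analyticOnNhd hU)
    (convex_halfSpace_re_gt 0).isPreconnected (by simp : (1 : ℂ) ∈ _) ?_
  have hreal : Tendsto ((↑) : ℝ → ℂ) (𝓝[≠] 1) (𝓝[≠] 1) := by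
    simpa using continuous_ofReal.continuousWithinAt.tendsto_nhdsWithin
      (x := (1 : ℝ)) (t := {(1 : ℂ)}ᶜ) fun r hr => by simpa using hr
  exact hreal.frequently
    ((eventually_gt_nhds one_pos).filter_mono nhdsWithin_le_nhds |>.mono hfg).frequently

theorem integral_cexp_neg_mul_mul_cpow {z s : ℂ} (hz : 0 < z.re) (hs : 0 < s.re) :
    ∫ g in Ioi (0 : ℝ), cexp (-z * g) * (g : ℂ) ^ (s - 1) = z ^ (-s) * Gamma s := by
  refine eqOn_re_pos_of_forall_ofReal_eq
    (f := fun w => ∫ g in Ioi (0 : ℝ), cexp (-w * g) * (g : ℂ) ^ (s - 1))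
    (g := fun w => w ^ (-s) * Gamma s)
    (fun w hw => (differentiableAt_integral_cexp_neg_mul_mul_cpow hw
      (by simpa using hs)).differentiableWithinAt)
    (fun w hw => (differentiableAt_id.cpow_const (.inl hw)).mul_const _ |>.differentiableWithinAt)
    (fun r hr => ?_) hz
  have hr' : (r : ℂ).arg ≠ Real.pi := by simp [arg_ofReal_of_nonneg hr.le, Real.pi_ne_zero.symm]
  rw [cpow_neg, ← inv_cpow _ _ hr', ← one_div, ← integral_cpow_mul_exp_neg_mul_Ioi hs hr]
  refine setIntegral_congr_fun measurableSet_Ioi fun g _ => ?_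
  rw [neg_mul, mul_comm]

section DifferenceOfExponentials

variable {β γ : ℂ}

lemma norm_cexp_sub_cexp_mul_cpow_le {c : ℝ} (hβ : c ≤ β.re) (hγ : c ≤ γ.re) (s : ℂ) {g : ℝ}
    (hg : 0 < g) : ‖(cexp (-β * g) - cexp (-γ * g)) * (g : ℂ) ^ s‖ ≤
      ‖β - γ‖ * (g ^ (s.re + 1) * Real.exp (-c * g)) := by
  rw [norm_mul, norm_cpow_eq_rpow_re_of_pos hg, Real.rpow_add_one hg.ne']
  calc _ ≤ g * Real.exp (-c * g) * ‖β - γ‖ * g ^ s.re := by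
        gcongr
        exact norm_cexp_neg_mul_sub_le hβ hγ hg.le
    _ = _ := by ring

lemma integrableOn_cexp_sub_cexp_mul_cpow (hβ : 0 < β.re) (hγ : 0 < γ.re) {s : ℂ}
    (hs : -2 < s.re) :
    IntegrableOn (fun g : ℝ => (cexp (-β * g) - cexp (-γ * g)) * (g : ℂ) ^ s) (Ioi 0) := by
  refine ((integrableOn_rpow_mul_exp_neg_mul (t := s.re + 1) (by linarith)
    (lt_min hβ hγ)).const_mul ‖β - γ‖).mono'
    (aestronglyMeasurable_mul_ofReal_cpow (by fun_prop) s) ?_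
  filter_upwards [self_mem_ae_restrict measurableSet_Ioi] with g hg
  exact norm_cexp_sub_cexp_mul_cpow_le (min_le_left _ _) (min_le_right _ _) s hg

lemma tendsto_cexp_sub_cexp_mul_cpow_atTop (hβ : 0 < β.re) (hγ : 0 < γ.re) (s : ℂ) :
    Tendsto (fun g : ℝ => (cexp (-β * g) - cexp (-γ * g)) * (g : ℂ) ^ s) atTop (𝓝 0) := by
  refine squeeze_zero_norm' ?_ (by simpa only [mul_zero] using
    (tendsto_rpow_mul_exp_neg_mul_atTop_nhds_zero (s.re + 1) _ (lt_min hβ hγ)).const_mul ‖β - γ‖)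
  filter_upwards [eventually_gt_atTop 0] with g hg
  exact norm_cexp_sub_cexp_mul_cpow_le (min_le_left _ _) (min_le_right _ _) s hg

lemma tendsto_cexp_sub_cexp_mul_cpow_nhdsGT_zero {s : ℂ} (hs : -1 < s.re) :
    Tendsto (fun g : ℝ => (cexp (-β * g) - cexp (-γ * g)) * (g : ℂ) ^ s) (𝓝[>] 0) (𝓝 0) := by
  have hcont : ContinuousAt (fun g : ℝ => g ^ (s.re + 1) * Real.exp (-min β.re γ.re * g)) 0 :=
    (Real.continuousAt_rpow_const 0 (s.re + 1) (.inr (by linarith))).mul (by fun_prop)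
  have hbound := hcont.tendsto
  rw [Real.zero_rpow (by linarith), zero_mul] at hbound
  refine squeeze_zero_norm' ?_
    (by simpa only [mul_zero] using (hbound.const_mul ‖β - γ‖).mono_left nhdsWithin_le_nhds)
  filter_upwards [self_mem_nhdsWithin] with g hg
  exact norm_cexp_sub_cexp_mul_cpow_le (min_le_left _ _) (min_le_right _ _) s hg

lemma hasDerivAt_cexp_sub_cexp_mul_cpow {α : ℂ} (hα : α ≠ 0) {g : ℝ} (hg : 0 < g) :
    HasDerivAt (fun g : ℝ => (cexp (-β * g) - cexp (-γ * g)) * (g : ℂ) ^ α)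
      (-β * (cexp (-β * g) * (g : ℂ) ^ α) + γ * (cexp (-γ * g) * (g : ℂ) ^ α) +
        α * ((cexp (-β * g) - cexp (-γ * g)) * (g : ℂ) ^ (α - 1))) g := by
  have hexp : ∀ z : ℂ, HasDerivAt (fun g : ℝ => cexp (-z * g)) (-z * cexp (-z * g)) g := fun z => by
    simpa [mul_comm] using (((hasDerivAt_id (g : ℂ)).const_mul (-z)).cexp).comp_ofReal
  refine (((hexp β).sub (hexp γ)).mul (hasDerivAt_ofReal_cpow_const hg.ne' hα)).congr_deriv ?_
  simp only [Pi.sub_apply]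
  ring

end DifferenceOfExponentials

lemma mul_cpow_neg_add_one {z : ℂ} (hz : z ≠ 0) (α : ℂ) : z * z ^ (-(α + 1)) = z ^ (-α) := by
  rw [neg_add, cpow_add _ _ hz, cpow_neg_one, mul_left_comm, mul_inv_cancel₀ hz, mul_one]

theorem integral_cexp_sub_cexp_mul_cpow {β γ α : ℂ} (hβ : 0 < β.re) (hγ : 0 < γ.re)
    (hα₁ : -1 < α.re) (hα : α ≠ 0) :
    ∫ g in Ioi (0 : ℝ), (cexp (-β * g) - cexp (-γ * g)) * (g : ℂ) ^ (α - 1) =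
      Gamma α * (β ^ (-α) - γ ^ (-α)) := by
  have hint : ∀ {z : ℂ}, 0 < z.re →
      IntegrableOn (fun g : ℝ => cexp (-z * g) * (g : ℂ) ^ α) (Ioi 0) :=
    fun hz => integrableOn_cexp_neg_mul_mul_cpow hz hα₁
  have hint_sub := integrableOn_cexp_sub_cexp_mul_cpow hβ hγ (s := α - 1) (by simp; linarith)
  have hmellin : ∀ {z : ℂ}, 0 < z.re →
      z * ∫ g in Ioi (0 : ℝ), cexp (-z * g) * (g : ℂ) ^ α = α * Gamma α * z ^ (-α) := fun hz => by
    have := integral_cexp_neg_mul_mul_cpow hz (s := α + 1) (by simp; linarith)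
    rw [add_sub_cancel_right] at this
    rw [this, Gamma_add_one α hα, ← mul_assoc, mul_cpow_neg_add_one (fun h => by simp [h] at hz)]
    ring
  have hβint := (hint hβ).const_mul (-β)
  have hγint := (hint hγ).const_mul γ
  have hβγint : IntegrableOn (fun g : ℝ =>
      -β * (cexp (-β * g) * (g : ℂ) ^ α) + γ * (cexp (-γ * g) * (g : ℂ) ^ α)) (Ioi 0) :=
    hβint.add hγint
  have hparts := integral_Ioi_of_hasDerivAt_of_tendsto
    (continuousWithinAt_Ioi_iff_Ici.1 (by
      simpa only [ContinuousWithinAt, ofReal_zero, mul_zero, sub_self, zero_mul] using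
        tendsto_cexp_sub_cexp_mul_cpow_nhdsGT_zero hα₁))
    (fun g hg => hasDerivAt_cexp_sub_cexp_mul_cpow hα hg)
    (hβγint.add (hint_sub.const_mul α)) (tendsto_cexp_sub_cexp_mul_cpow_atTop hβ hγ α)
  rw [integral_add hβγint (hint_sub.const_mul α), integral_add hβint hγint,
    integral_const_mul, integral_const_mul, integral_const_mul, neg_mul, hmellin hβ,
    hmellin hγ] at hparts
  refine mul_left_cancel₀ hα ?_
  simp only [ofReal_zero, mul_zero, sub_self, zero_mul] at hparts
  linear_combination hparts

/-- **Subtracted exponential Mellin transform on the strip ⟨-1,0⟩.**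
For `Re β > 0` and `-1 < Re α < 0`, `g ↦ (e^{-βg} - e^{-g}) g^{α-1}` is integrable on `(0,∞)`
and `∫₀^∞ (e^{-βg} - e^{-g}) g^{α-1} dg = Γ(α) (β^{-α} - 1)`,
where `β^{-α} = exp (-α Log β)`. -/
theorem mellin_sub_exp (β α : ℂ) (hβ : 0 < β.re) (hm1 : -1 < α.re) (h0 : α.re < 0) :
    IntegrableOn
      (fun g : ℝ => (Complex.exp (-β * g) - Complex.exp (-(g : ℂ))) * (g : ℂ) ^ (α - 1))
      (Ioi 0) ∧
    ∫ g in Ioi (0 : ℝ), (Complex.exp (-β * g) - Complex.exp (-(g : ℂ))) * (g : ℂ) ^ (α - 1) =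
      Complex.Gamma α * (Complex.exp (-α * Complex.log β) - 1) := by
  have hexp_one : ∀ g : ℝ, cexp (-(g : ℂ)) = cexp (-1 * g) := fun g => by rw [neg_one_mul]
  simp only [hexp_one]
  refine ⟨integrableOn_cexp_sub_cexp_mul_cpow hβ one_pos (by simp; linarith),
    (integral_cexp_sub_cexp_mul_cpow hβ one_pos hm1 (fun h => by simp [h] at h0)).trans ?_⟩
  rw [one_cpow, cpow_def_of_ne_zero (fun h => by simp [h] at hβ), mul_comm (log β)]
end

section
/- Let β ∈ ℂ with Re β > 0. Then g ↦ (e^{−βg} − e^{−g})/g is integrable on (0,∞) and ∫₀^∞ (e^{−βg} − e^{−g}) g^{−1} dg = −Log β, where Log is the principal branch of the complex logarithm. -/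
/-!
The integrand is `-(β - 1) ∫₀¹ e^{-(1 + t(β - 1))g} dt`: integrate the derivative of
`z ↦ e^{-zg}` along the segment from `1` to `β`. On that segment `Re z ≥ min 1 (Re β) > 0`, so the
double integral converges absolutely; Fubini and `∫₀^∞ e^{-zg} dg = z⁻¹` turn it into
`-(β - 1) ∫₀¹ (1 + t(β - 1))⁻¹ dt = -log β`.
-/

open MeasureTheory Set Complex intervalIntegral

lemma cexp_neg_add_mul_sub_cexp_neg_mul (z₀ z₁ x : ℂ) :
    cexp (-(z₀ + z₁) * x) - cexp (-z₀ * x) =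
      -(z₁ * x) * ∫ t in (0 : ℝ)..1, cexp (-(z₀ + t • z₁) * x) := by
  have key := integral_unitInterval_deriv_eq_sub (f := fun z ↦ cexp (-z * x))
    (f' := fun z ↦ -x * cexp (-z * x)) (z₀ := z₀) (z₁ := z₁) (by fun_prop) fun _ _ ↦
      ((hasDerivAt_neg _).mul_const x).cexp.congr_deriv (by ring)
  rw [← key, intervalIntegral.integral_const_mul, smul_eq_mul]
  ring

lemma sub_cexp_div_eq_integral_Ioc (β : ℂ) {g : ℝ} (hg : g ≠ 0) :
    (cexp (-β * g) - cexp (-(g : ℂ))) / (g : ℂ) =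
      -(β - 1) * ∫ t in Ioc (0 : ℝ) 1, cexp (-(1 + t • (β - 1)) * g) := by
  have h := cexp_neg_add_mul_sub_cexp_neg_mul 1 (β - 1) g
  rw [add_sub_cancel, neg_mul 1, one_mul] at h
  rw [h, ← integral_of_le zero_le_one]
  field_simp [ofReal_ne_zero.2 hg]

lemma min_one_re_le_re_one_add_smul (β : ℂ) {t : ℝ} (ht : t ∈ Icc (0 : ℝ) 1) :
    min 1 β.re ≤ (1 + t • (β - 1)).re := by
  have hre : (1 + t • (β - 1)).re = (1 - t) * 1 + t * β.re := by
    simp only [real_smul, add_re, one_re, mul_re, ofReal_re, sub_re, ofReal_im, sub_im, one_im,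
      sub_zero, zero_mul, mul_one]
    ring
  rw [hre]
  nlinarith [min_le_left 1 β.re, min_le_right 1 β.re, ht.1, ht.2]

lemma norm_cexp_neg_mul_le {z : ℂ} {c g : ℝ} (hc : c ≤ z.re) (hg : 0 ≤ g) :
    ‖cexp (-z * g)‖ ≤ Real.exp (-c * g) := by
  rw [norm_exp, Real.exp_le_exp]
  simp only [neg_mul, neg_re, mul_re, ofReal_re, ofReal_im, mul_zero, sub_zero]
  nlinarith

lemma integral_cexp_neg_mul_Ioi {z : ℂ} (hz : 0 < z.re) :
    ∫ g in Ioi (0 : ℝ), cexp (-z * g) = z⁻¹ := by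
  rw [integral_exp_mul_complex_Ioi (by simpa using hz)]
  simp [neg_div, div_neg]

lemma integrable_cexp_neg_one_add_smul_mul {β : ℂ} (hβ : 0 < β.re) :
    Integrable (Function.uncurry fun (g t : ℝ) ↦ cexp (-(1 + t • (β - 1)) * g))
      ((volume.restrict (Ioi 0)).prod (volume.restrict (Ioc 0 1))) := by
  have hc : 0 < min 1 β.re := lt_min one_pos hβ
  refine Integrable.mono' ((exp_neg_integrableOn_Ioi 0 hc).mul_prod (integrable_const 1))
    (by fun_prop) ?_
  rw [Measure.prod_restrict, ae_restrict_iff' (measurableSet_Ioi.prod measurableSet_Ioc)]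
  refine .of_forall fun ⟨g, t⟩ ⟨hg, ht⟩ ↦ ?_
  simpa only [mul_one, Function.uncurry_apply_pair] using norm_cexp_neg_mul_le
    (min_one_re_le_re_one_add_smul β (Ioc_subset_Icc_self ht)) (le_of_lt hg)

/-- **Frullani-type integral for the logarithm.**
For `β : ℂ` with `Re β > 0`, `g ↦ (e^{-βg} - e^{-g})/g` is integrable on `(0,∞)` and
`∫₀^∞ (e^{-βg} - e^{-g}) g^{-1} dg = - Log β`, with `Log` the principal complex logarithm. -/
theorem integral_sub_exp_div_eq_neg_log (β : ℂ) (hβ : 0 < β.re) :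
    IntegrableOn (fun g : ℝ => (Complex.exp (-β * g) - Complex.exp (-(g : ℂ))) / (g : ℂ))
      (Ioi 0) ∧
    ∫ g in Ioi (0 : ℝ), (Complex.exp (-β * g) - Complex.exp (-(g : ℂ))) / (g : ℂ) =
      -Complex.log β := by
  have hF := integrable_cexp_neg_one_add_smul_mul hβ
  have hrep : ∀ g ∈ Ioi (0 : ℝ), (cexp (-β * g) - cexp (-(g : ℂ))) / (g : ℂ) =
      -(β - 1) * ∫ t in Ioc (0 : ℝ) 1, cexp (-(1 + t • (β - 1)) * g) :=
    fun g hg ↦ sub_cexp_div_eq_integral_Ioc β (ne_of_gt hg)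
  have hinner : ∀ t ∈ Ioc (0 : ℝ) 1,
      ∫ g in Ioi (0 : ℝ), cexp (-(1 + t • (β - 1)) * g) = (1 + t • (β - 1))⁻¹ :=
    fun t ht ↦ integral_cexp_neg_mul_Ioi
      ((lt_min one_pos hβ).trans_le (min_one_re_le_re_one_add_smul β (Ioc_subset_Icc_self ht)))
  refine ⟨(hF.integral_prod_left.const_mul (-(β - 1))).congr
    ((ae_restrict_iff' measurableSet_Ioi).2 (.of_forall fun g hg ↦ (hrep g hg).symm)), ?_⟩
  calc ∫ g in Ioi (0 : ℝ), (cexp (-β * g) - cexp (-(g : ℂ))) / (g : ℂ)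
      = -(β - 1) * ∫ g in Ioi (0 : ℝ), ∫ t in Ioc (0 : ℝ) 1, cexp (-(1 + t • (β - 1)) * g) := by
        rw [← MeasureTheory.integral_const_mul]
        exact setIntegral_congr_fun measurableSet_Ioi hrep
    _ = -(β - 1) * ∫ t in Ioc (0 : ℝ) 1, (1 + t • (β - 1))⁻¹ := by
        rw [integral_integral_swap hF, setIntegral_congr_fun measurableSet_Ioc hinner]
    _ = -log β := by
        have hβ' : 1 + (β - 1) ∈ slitPlane := by
          rw [add_sub_cancel]
          exact mem_slitPlane_iff.2 (.inl hβ)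
        rw [← integral_of_le zero_le_one, neg_mul, ← log_eq_integral hβ', add_sub_cancel]
end

section
/- Let α ∈ ℂ with σ = Re α, and let f, g : (0,∞) → ℂ be measurable with x ↦ |f(x)| x^{σ−1} and x ↦ |g(x)| x^{−σ} integrable on (0,∞). Then the iterated integral ∫₀^∞ ∫₀^∞ f(xy) g(y) x^{α−1} dy dx converges absolutely and equals f̃(α) · g̃(1−α), the product of the Mellin transform of f at α and the Mellin transform of g at 1−α. -/
/-!
For fixed `y > 0` the substitution `u = x y` turns the inner integral `∫ f(xy) x^{α-1} dx` into
`y^{-α} f̃(α)` (`mellin_comp_mul_right`). The same substitution applied to absolute values gives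
`∫∫ |f(xy) g(y) x^{α-1}| dx dy = ∫ |g(y)| y^{-σ} dy · ∫ |f(u)| u^{σ-1} du < ∞`, so Fubini applies,
and integrating in `x` first leaves `f̃(α) ∫ g(y) y^{-α} dy = f̃(α) g̃(1-α)`.
-/

open MeasureTheory Set Complex

section NormedSpace

variable {E : Type*} [NormedAddCommGroup E] [NormedSpace ℂ E]

theorem mellinConvergent_of_integrableOn_norm_mul_rpow {f : ℝ → E} {s : ℂ}
    (hfm : AEStronglyMeasurable f (volume.restrict (Ioi 0)))
    (hf : IntegrableOn (fun x : ℝ => ‖f x‖ * x ^ (s.re - 1)) (Ioi 0)) :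
    MellinConvergent f s := by
  rw [MellinConvergent, mellin_convergent_iff_norm subset_rfl measurableSet_Ioi hfm]
  simpa only [mul_comm] using hf

theorem mellin_ofReal_norm (f : ℝ → E) (s : ℂ) :
    mellin (fun t => (‖f t‖ : ℂ)) s.re = ↑(∫ t in Ioi (0 : ℝ), ‖(t : ℂ) ^ (s - 1) • f t‖) := by
  rw [mellin, ← integral_complex_ofReal]
  refine setIntegral_congr_fun measurableSet_Ioi fun t (ht : 0 < t) => ?_
  rw [norm_smul, norm_cpow_eq_rpow_re_of_pos ht, smul_eq_mul, ofReal_mul, ofReal_cpow ht.le,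
    sub_re, one_re, ofReal_sub, ofReal_one]

theorem integral_norm_mellin_integrand_comp_mul_right (f : ℝ → E) (s : ℂ) {a : ℝ} (ha : 0 < a) :
    ∫ t in Ioi (0 : ℝ), ‖(t : ℂ) ^ (s - 1) • f (t * a)‖ =
      a ^ (-s.re) * ∫ t in Ioi (0 : ℝ), ‖(t : ℂ) ^ (s - 1) • f t‖ := by
  apply ofReal_injective
  rw [← mellin_ofReal_norm (fun t => f (t * a)), mellin_comp_mul_right (fun t => (‖f t‖ : ℂ)) _ ha,
    mellin_ofReal_norm, ofReal_mul, ofReal_cpow ha.le, ofReal_neg, smul_eq_mul]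

end NormedSpace

section StarConvolution

variable {f g : ℝ → ℂ} {s : ℂ}

theorem star_integrand_eq (x y : ℝ) :
    f (x * y) * g y * (x : ℂ) ^ (s - 1) = g y * ((x : ℂ) ^ (s - 1) • f (x * y)) := by
  rw [smul_eq_mul]; ring

theorem MellinConvergent.comp_mul_right {a : ℝ} (ha : 0 < a) (hf : MellinConvergent f s) :
    MellinConvergent (fun t => f (t * a)) s := by
  simpa only [mul_comm _ a] using (MellinConvergent.comp_mul_left ha).2 hf

theorem integrableOn_star_integrand (hfm : Measurable f) (hgm : Measurable g)
    (hf : MellinConvergent f s) (hg : MellinConvergent g (1 - s)) :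
    IntegrableOn (fun p : ℝ × ℝ => f (p.1 * p.2) * g p.2 * (p.1 : ℂ) ^ (s - 1))
      (Ioi 0 ×ˢ Ioi 0) := by
  rw [IntegrableOn, Measure.volume_eq_prod, ← Measure.prod_restrict]
  refine (integrable_prod_iff' (by fun_prop)).2 ⟨?_, ?_⟩
  · filter_upwards [ae_restrict_mem measurableSet_Ioi] with y (hy : 0 < y)
    simpa only [star_integrand_eq] using (hf.comp_mul_right hy).const_mul (g y)
  · have hnorm : ∀ y ∈ Ioi (0 : ℝ), ∫ x in Ioi 0, ‖f (x * y) * g y * (x : ℂ) ^ (s - 1)‖ =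
        ‖(y : ℂ) ^ ((1 - s) - 1) • g y‖ * ∫ x in Ioi (0 : ℝ), ‖(x : ℂ) ^ (s - 1) • f x‖ := by
      intro y (hy : 0 < y)
      simp_rw [star_integrand_eq, norm_mul, integral_const_mul,
        integral_norm_mellin_integrand_comp_mul_right f s hy, norm_smul,
        norm_cpow_eq_rpow_re_of_pos hy]
      simp only [sub_sub_cancel_left, neg_re]
      ring
    exact (hg.norm.mul_const _).congr ((ae_restrict_mem measurableSet_Ioi).mono
      fun y hy => (hnorm y hy).symm)

theorem integral_integral_star_integrand (hfm : Measurable f) (hgm : Measurable g)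
    (hf : MellinConvergent f s) (hg : MellinConvergent g (1 - s)) :
    ∫ x in Ioi (0 : ℝ), ∫ y in Ioi (0 : ℝ), f (x * y) * g y * (x : ℂ) ^ (s - 1) =
      mellin f s * mellin g (1 - s) := by
  have hF := integrableOn_star_integrand hfm hgm hf hg
  rw [IntegrableOn, Measure.volume_eq_prod, ← Measure.prod_restrict] at hF
  rw [integral_integral_swap hF, mul_comm, mellin, ← integral_mul_const]
  refine setIntegral_congr_fun measurableSet_Ioi fun y (hy : 0 < y) => ?_
  simp_rw [star_integrand_eq, integral_const_mul]
  rw [← mellin, mellin_comp_mul_right f s hy, sub_sub_cancel_left, smul_eq_mul, smul_eq_mul]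
  ring

end StarConvolution

/-- **Mellin transform of the ⋆-convolution.**
Let `σ = Re α` and let `f, g : (0,∞) → ℂ` be measurable with `x ↦ |f x| x^{σ-1}` and
`x ↦ |g x| x^{-σ}` integrable on `(0,∞)`. Then the iterated integral
`∫₀^∞ ∫₀^∞ f(xy) g(y) x^{α-1} dy dx` converges absolutely and equals
`f̃(α) · g̃(1-α)`. -/
theorem mellin_star_convolution (α : ℂ) (f g : ℝ → ℂ)
    (hfm : Measurable f) (hgm : Measurable g)
    (hf : IntegrableOn (fun x : ℝ => ‖f x‖ * x ^ (α.re - 1)) (Ioi 0))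
    (hg : IntegrableOn (fun x : ℝ => ‖g x‖ * x ^ (-α.re)) (Ioi 0)) :
    IntegrableOn (fun p : ℝ × ℝ => f (p.1 * p.2) * g p.2 * (p.1 : ℂ) ^ (α - 1))
      (Ioi (0 : ℝ) ×ˢ Ioi (0 : ℝ)) ∧
    ∫ x in Ioi (0 : ℝ), ∫ y in Ioi (0 : ℝ), f (x * y) * g y * (x : ℂ) ^ (α - 1) =
      (∫ x in Ioi (0 : ℝ), f x * (x : ℂ) ^ (α - 1)) *
        ∫ x in Ioi (0 : ℝ), g x * (x : ℂ) ^ ((1 - α) - 1) := by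
  have hfα : MellinConvergent f α :=
    mellinConvergent_of_integrableOn_norm_mul_rpow hfm.aestronglyMeasurable hf
  have hgα : MellinConvergent g (1 - α) :=
    mellinConvergent_of_integrableOn_norm_mul_rpow hgm.aestronglyMeasurable (by simpa using hg)
  refine ⟨integrableOn_star_integrand hfm hgm hfα hgα, ?_⟩
  rw [integral_integral_star_integrand hfm hgm hfα hgα]
  simp only [mellin, smul_eq_mul, mul_comm (f _), mul_comm (g _)]
end

section
/- Let α ∈ ℂ with σ = Re α, and let f : (0,∞) → ℂ be measurable with x ↦ |f(x)| x^{σ−1} integrable on (0,∞). Define the multiplicative convolution powers f^{∗1} = f and f^{∗(n+1)} = f ∗ f^{∗n}. Then for almost every x > 0 the series Σ_{n≥1} (−1)^{n−1} f^{∗n}(x)/n! converges absolutely, its sum S(x) satisfies x ↦ |S(x)| x^{σ−1} integrable, and its Mellin transform at α equals 1 − exp(−f̃(α)): ∫₀^∞ S(x) x^{α−1} dx = 1 − e^{−f̃(α)}, where f̃(α) = ∫₀^∞ f(x) x^{α−1} dx. (Equivalently, the Mellin transform sends the convolution exponential of −f to the ordinary exponential of −f̃(α).) -/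
open MeasureTheory Set

/-- Multiplicative convolution on `(0,∞)`: `(f ∗ g)(x) = ∫₀^∞ f(y) g(x/y) y⁻¹ dy`. -/
noncomputable def mulConv (f g : ℝ → ℂ) (x : ℝ) : ℂ :=
  ∫ y in Set.Ioi (0 : ℝ), f y * g (x / y) * (y : ℂ)⁻¹

/-- Multiplicative convolution powers: `mulConvPow f 0 = f = f^{∗1}` and
`mulConvPow f (n+1) = f ∗ mulConvPow f n = f^{∗(n+2)}`; so `mulConvPow f n = f^{∗(n+1)}`. -/
noncomputable def mulConvPow (f : ℝ → ℂ) : ℕ → ℝ → ℂ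
  | 0 => f
  | n + 1 => mulConv f (mulConvPow f n)

/-!
Substituting `x = y z` in the double integral `∫∫ x^(s-1) f(y) g(x/y) y⁻¹ dy dx` and applying
Fubini shows that the Mellin transform is multiplicative on `mulConv`, and that the weighted
`L¹` norm `∫ ‖x^(s-1) h(x)‖ dx` is submultiplicative. Hence the `n`-th term of the series has
weighted norm at most `A^n / n!`, with `A` the weighted norm of `f`, so the series converges
absolutely in this `L¹` space and pointwise almost everywhere, and can be transformed term by term:
`∑_{n≥1} (-1)^(n-1) f̃(α)^n / n! = 1 - exp (-f̃(α))`.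
-/

lemma integral_comp_inv_mul_Ioi {E : Type*} [NormedAddCommGroup E] [NormedSpace ℝ E]
    (h : ℝ → E) {y : ℝ} (hy : 0 < y) :
    ∫ x in Ioi 0, h (y⁻¹ * x) = y • ∫ x in Ioi 0, h x := by
  simpa using integral_comp_mul_left_Ioi h 0 (inv_pos.2 hy)

lemma mellin_eq_integral_mul_cpow (f : ℝ → ℂ) (s : ℂ) :
    mellin f s = ∫ x in Ioi 0, f x * (x : ℂ) ^ (s - 1) := by
  simp only [mellin, smul_eq_mul, mul_comm]

lemma MellinConvergent.integrableOn_norm_mul_rpow {f : ℝ → ℂ} {s : ℂ}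
    (hf : MellinConvergent f s) :
    IntegrableOn (fun x : ℝ => ‖f x‖ * x ^ (s.re - 1)) (Ioi 0) := by
  refine (integrableOn_congr_fun (fun x (hx : 0 < x) => ?_) measurableSet_Ioi).1 hf.norm
  rw [norm_smul, Complex.norm_cpow_eq_rpow_re_of_pos hx, Complex.sub_re, Complex.one_re,
    mul_comm]

/-- The integrand of `mellin (mulConv f g) s` written as a double integral in `(x, y)`. -/
noncomputable def mulConvMellinKernel (f g : ℝ → ℂ) (s : ℂ) (p : ℝ × ℝ) : ℂ :=
  (p.1 : ℂ) ^ (s - 1) * (f p.2 * g (p.1 / p.2) * (p.2 : ℂ)⁻¹)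

section MulConv

variable {f g : ℝ → ℂ} {s : ℂ}

lemma measurable_mulConvMellinKernel (hf : Measurable f) (hg : Measurable g) :
    Measurable (mulConvMellinKernel f g s) := by
  unfold mulConvMellinKernel
  fun_prop

lemma measurable_mulConv (hf : Measurable f) (hg : Measurable g) : Measurable (mulConv f g) := by
  have : Measurable fun p : ℝ × ℝ => f p.2 * g (p.1 / p.2) * (p.2 : ℂ)⁻¹ := by fun_prop
  exact this.stronglyMeasurable.integral_prod_right'.measurable

lemma cpow_smul_mulConv (x : ℝ) :
    (x : ℂ) ^ (s - 1) • mulConv f g x = ∫ y in Ioi 0, mulConvMellinKernel f g s (x, y) := by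
  rw [smul_eq_mul, mulConv, ← integral_const_mul]
  rfl

lemma mulConvMellinKernel_eq {x y : ℝ} (hx : 0 < x) (hy : 0 < y) :
    mulConvMellinKernel f g s (x, y) =
      (y : ℂ) ^ (s - 1) * f y * (y : ℂ)⁻¹ * (((y⁻¹ * x : ℝ) : ℂ) ^ (s - 1) * g (y⁻¹ * x)) := by
  have hcpow : (x : ℂ) ^ (s - 1) = (y : ℂ) ^ (s - 1) * ((y⁻¹ * x : ℝ) : ℂ) ^ (s - 1) := by
    rw [← Complex.mul_cpow_ofReal_nonneg hy.le (by positivity), ← Complex.ofReal_mul,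
      mul_inv_cancel_left₀ hy.ne']
  rw [mulConvMellinKernel, hcpow, div_eq_inv_mul]
  ring

lemma integral_mulConvMellinKernel_left {y : ℝ} (hy : 0 < y) :
    ∫ x in Ioi 0, mulConvMellinKernel f g s (x, y) = (y : ℂ) ^ (s - 1) * f y * mellin g s := by
  rw [setIntegral_congr_fun measurableSet_Ioi fun x hx => mulConvMellinKernel_eq hx hy,
    integral_const_mul, integral_comp_inv_mul_Ioi (fun x => (x : ℂ) ^ (s - 1) * g x) hy]
  simp only [mellin, smul_eq_mul, Complex.real_smul]
  field_simp [Complex.ofReal_ne_zero.2 hy.ne']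

lemma integral_norm_mulConvMellinKernel_left {y : ℝ} (hy : 0 < y) :
    ∫ x in Ioi 0, ‖mulConvMellinKernel f g s (x, y)‖ =
      ‖(y : ℂ) ^ (s - 1) * f y‖ * ∫ x in Ioi (0 : ℝ), ‖(x : ℂ) ^ (s - 1) • g x‖ := by
  rw [setIntegral_congr_fun measurableSet_Ioi fun x hx => by
      rw [mulConvMellinKernel_eq hx hy, norm_mul],
    integral_const_mul, integral_comp_inv_mul_Ioi (fun x => ‖(x : ℂ) ^ (s - 1) * g x‖) hy]
  simp only [smul_eq_mul, norm_mul, norm_inv, Complex.norm_real, Real.norm_of_nonneg hy.le]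
  field_simp

lemma MellinConvergent.integrableOn_mulConvMellinKernel_left (hg : MellinConvergent g s)
    {y : ℝ} (hy : 0 < y) :
    IntegrableOn (fun x => mulConvMellinKernel f g s (x, y)) (Ioi 0) := by
  refine (integrableOn_congr_fun (fun x hx => mulConvMellinKernel_eq hx hy)
    measurableSet_Ioi).2 (Integrable.const_mul ?_ _)
  have := (integrableOn_Ioi_comp_mul_left_iff (fun x => (x : ℂ) ^ (s - 1) * g x) 0
    (inv_pos.2 hy)).2
  exact this (by rw [mul_zero]; exact hg)

lemma integrable_mulConvMellinKernel (hf : Measurable f) (hg : Measurable g)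
    (hfs : MellinConvergent f s) (hgs : MellinConvergent g s) :
    Integrable (mulConvMellinKernel f g s)
      ((volume.restrict (Ioi 0)).prod (volume.restrict (Ioi 0))) := by
  rw [integrable_prod_iff' (measurable_mulConvMellinKernel hf hg).aestronglyMeasurable]
  constructor
  · filter_upwards [ae_restrict_mem measurableSet_Ioi] with y hy
    exact hgs.integrableOn_mulConvMellinKernel_left hy
  · refine (hfs.norm.mul_const (∫ x in Ioi (0 : ℝ), ‖(x : ℂ) ^ (s - 1) • g x‖)).congr ?_
    filter_upwards [ae_restrict_mem measurableSet_Ioi] with y hy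
    rw [integral_norm_mulConvMellinKernel_left hy, smul_eq_mul]

theorem mellinConvergent_mulConv (hf : Measurable f) (hg : Measurable g)
    (hfs : MellinConvergent f s) (hgs : MellinConvergent g s) :
    MellinConvergent (mulConv f g) s := by
  have := (integrable_mulConvMellinKernel hf hg hfs hgs).integral_prod_left
  simpa only [MellinConvergent, IntegrableOn, cpow_smul_mulConv] using this

theorem mellin_mulConv (hf : Measurable f) (hg : Measurable g)
    (hfs : MellinConvergent f s) (hgs : MellinConvergent g s) :
    mellin (mulConv f g) s = mellin f s * mellin g s := by
  have hK := integrable_mulConvMellinKernel hf hg hfs hgs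
  calc mellin (mulConv f g) s
      = ∫ x in Ioi 0, ∫ y in Ioi 0, mulConvMellinKernel f g s (x, y) := by
        simp only [mellin, cpow_smul_mulConv]
    _ = ∫ y in Ioi 0, ∫ x in Ioi 0, mulConvMellinKernel f g s (x, y) :=
        integral_integral_swap hK
    _ = ∫ y in Ioi (0 : ℝ), (y : ℂ) ^ (s - 1) * f y * mellin g s :=
        setIntegral_congr_fun measurableSet_Ioi fun y hy => integral_mulConvMellinKernel_left hy
    _ = mellin f s * mellin g s := integral_mul_const _ _

theorem integral_norm_cpow_smul_mulConv_le (hf : Measurable f) (hg : Measurable g)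
    (hfs : MellinConvergent f s) (hgs : MellinConvergent g s) :
    ∫ x in Ioi (0 : ℝ), ‖(x : ℂ) ^ (s - 1) • mulConv f g x‖ ≤
      (∫ x in Ioi (0 : ℝ), ‖(x : ℂ) ^ (s - 1) • f x‖) *
        ∫ x in Ioi (0 : ℝ), ‖(x : ℂ) ^ (s - 1) • g x‖ := by
  have hK := integrable_mulConvMellinKernel hf hg hfs hgs
  calc ∫ x in Ioi (0 : ℝ), ‖(x : ℂ) ^ (s - 1) • mulConv f g x‖
      ≤ ∫ x in Ioi 0, ∫ y in Ioi 0, ‖mulConvMellinKernel f g s (x, y)‖ := by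
        refine integral_mono (mellinConvergent_mulConv hf hg hfs hgs).norm
          hK.norm.integral_prod_left fun x => ?_
        rw [cpow_smul_mulConv]
        exact norm_integral_le_integral_norm _
    _ = ∫ y in Ioi 0, ∫ x in Ioi 0, ‖mulConvMellinKernel f g s (x, y)‖ :=
        integral_integral_swap hK.norm
    _ = ∫ y in Ioi (0 : ℝ),
          ‖(y : ℂ) ^ (s - 1) * f y‖ * ∫ x in Ioi (0 : ℝ), ‖(x : ℂ) ^ (s - 1) • g x‖ :=
        setIntegral_congr_fun measurableSet_Ioi fun y hy =>
          integral_norm_mulConvMellinKernel_left hy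
    _ = _ := integral_mul_const _ _

end MulConv

section MulConvPow

variable {f : ℝ → ℂ} {s : ℂ}

lemma measurable_mulConvPow (hf : Measurable f) : ∀ n, Measurable (mulConvPow f n)
  | 0 => hf
  | n + 1 => measurable_mulConv hf (measurable_mulConvPow hf n)

theorem mellinConvergent_mulConvPow (hf : Measurable f) (hfs : MellinConvergent f s) :
    ∀ n, MellinConvergent (mulConvPow f n) s
  | 0 => hfs
  | n + 1 => mellinConvergent_mulConv hf (measurable_mulConvPow hf n) hfs
      (mellinConvergent_mulConvPow hf hfs n)

theorem mellin_mulConvPow (hf : Measurable f) (hfs : MellinConvergent f s) (n : ℕ) :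
    mellin (mulConvPow f n) s = mellin f s ^ (n + 1) := by
  induction n with
  | zero => rw [zero_add, pow_one]; rfl
  | succ n ih =>
    rw [pow_succ', ← ih]
    exact mellin_mulConv hf (measurable_mulConvPow hf n) hfs
      (mellinConvergent_mulConvPow hf hfs n)

theorem integral_norm_cpow_smul_mulConvPow_le (hf : Measurable f) (hfs : MellinConvergent f s)
    (n : ℕ) :
    ∫ x in Ioi (0 : ℝ), ‖(x : ℂ) ^ (s - 1) • mulConvPow f n x‖ ≤
      (∫ x in Ioi (0 : ℝ), ‖(x : ℂ) ^ (s - 1) • f x‖) ^ (n + 1) := by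
  induction n with
  | zero => rw [zero_add, pow_one]; rfl
  | succ n ih =>
    rw [pow_succ']
    exact (integral_norm_cpow_smul_mulConv_le hf (measurable_mulConvPow hf n) hfs
      (mellinConvergent_mulConvPow hf hfs n)).trans
        (mul_le_mul_of_nonneg_left ih (integral_nonneg fun _ => norm_nonneg _))

end MulConvPow

section SummableIntegralNorm

variable {X E : Type*} [MeasurableSpace X] {μ : Measure X} [NormedAddCommGroup E] {F : ℕ → X → E}

lemma tsum_lintegral_enorm_ne_top (hF : ∀ n, Integrable (F n) μ)
    (hs : Summable fun n => ∫ x, ‖F n x‖ ∂μ) : ∑' n, ∫⁻ x, ‖F n x‖ₑ ∂μ ≠ ⊤ := by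
  simp_rw [← ofReal_integral_norm_eq_lintegral_enorm (hF _)]
  rw [← ENNReal.ofReal_tsum_of_nonneg (fun n => integral_nonneg fun _ => norm_nonneg _) hs]
  exact ENNReal.ofReal_ne_top

lemma ae_summable_norm_of_summable_integral_norm (hF : ∀ n, Integrable (F n) μ)
    (hs : Summable fun n => ∫ x, ‖F n x‖ ∂μ) : ∀ᵐ x ∂μ, Summable fun n => ‖F n x‖ :=
  summable_norm_of_tsum_eLpNorm_ne_top le_rfl (fun n => (hF n).1) <| by
    simpa only [eLpNorm_one_eq_lintegral_enorm] using tsum_lintegral_enorm_ne_top hF hs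

lemma integrable_tsum_of_summable_integral_norm [CompleteSpace E] (hF : ∀ n, Integrable (F n) μ)
    (hs : Summable fun n => ∫ x, ‖F n x‖ ∂μ) : Integrable (fun x => ∑' n, F n x) μ := by
  refine ⟨aestronglyMeasurable_of_tendsto_ae Filter.atTop
    (f := fun N x => ∑ n ∈ Finset.range N, F n x)
    (fun N => Finset.aestronglyMeasurable_fun_sum _ fun n _ => (hF n).1) ?_, ?_⟩
  · filter_upwards [ae_summable_norm_of_summable_integral_norm hF hs] with x hx
    exact hx.of_norm.hasSum.tendsto_sum_nat
  · calc ∫⁻ x, ‖∑' n, F n x‖ₑ ∂μ ≤ ∫⁻ x, ∑' n, ‖F n x‖ₑ ∂μ :=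
          lintegral_mono fun x => enorm_tsum_le_tsum_enorm
      _ = ∑' n, ∫⁻ x, ‖F n x‖ₑ ∂μ := lintegral_tsum fun n => (hF n).1.enorm
      _ < ⊤ := (tsum_lintegral_enorm_ne_top hF hs).lt_top

end SummableIntegralNorm

lemma hasSum_one_sub_exp_neg (z : ℂ) :
    HasSum (fun n : ℕ => (-1) ^ n / ((n + 1).factorial : ℂ) * z ^ (n + 1))
      (1 - Complex.exp (-z)) := by
  have h := ((hasSum_nat_add_iff' 1).2 (NormedSpace.expSeries_div_hasSum_exp (-z))).neg
  simp only [← Complex.exp_eq_exp_ℂ, Finset.range_one, Finset.sum_singleton, pow_zero,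
    Nat.factorial_zero, Nat.cast_one, div_one, neg_sub] at h
  refine h.congr_fun fun n => ?_
  rw [neg_pow z, pow_succ (-1 : ℂ) n]
  ring

section ConvPowerSeries

variable {f : ℝ → ℂ} {s : ℂ} {c : ℕ → ℂ}

lemma summable_integral_norm_cpow_smul_mul_mulConvPow (hf : Measurable f)
    (hfs : MellinConvergent f s)
    (hc : Summable fun n => ‖c n‖ * (∫ x in Ioi (0 : ℝ), ‖(x : ℂ) ^ (s - 1) • f x‖) ^ (n + 1)) :
    Summable fun n => ∫ x in Ioi (0 : ℝ), ‖(x : ℂ) ^ (s - 1) • (c n * mulConvPow f n x)‖ := by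
  refine hc.of_nonneg_of_le (fun n => integral_nonneg fun _ => norm_nonneg _) fun n => ?_
  calc ∫ x in Ioi (0 : ℝ), ‖(x : ℂ) ^ (s - 1) • (c n * mulConvPow f n x)‖
      = ‖c n‖ * ∫ x in Ioi (0 : ℝ), ‖(x : ℂ) ^ (s - 1) • mulConvPow f n x‖ := by
        rw [← integral_const_mul]
        simp only [smul_eq_mul, norm_mul, mul_left_comm]
    _ ≤ _ := mul_le_mul_of_nonneg_left (integral_norm_cpow_smul_mulConvPow_le hf hfs n)
        (norm_nonneg _)

lemma mellinConvergent_const_mul_mulConvPow (hf : Measurable f) (hfs : MellinConvergent f s)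
    (a : ℂ) (n : ℕ) : MellinConvergent (fun x => a * mulConvPow f n x) s :=
  (mellinConvergent_mulConvPow hf hfs n).const_smul a

theorem ae_summable_norm_mul_mulConvPow (hf : Measurable f) (hfs : MellinConvergent f s)
    (hc : Summable fun n => ‖c n‖ * (∫ x in Ioi (0 : ℝ), ‖(x : ℂ) ^ (s - 1) • f x‖) ^ (n + 1)) :
    ∀ᵐ x ∂(volume.restrict (Ioi 0)), Summable fun n => ‖c n * mulConvPow f n x‖ := by
  filter_upwards [ae_summable_norm_of_summable_integral_norm
      (fun n => mellinConvergent_const_mul_mulConvPow hf hfs (c n) n)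
      (summable_integral_norm_cpow_smul_mul_mulConvPow hf hfs hc),
    ae_restrict_mem measurableSet_Ioi] with x hx (hx0 : 0 < x)
  have hx0' : ‖(x : ℂ) ^ (s - 1)‖ ≠ 0 := by
    rw [Complex.norm_cpow_eq_rpow_re_of_pos hx0]
    positivity
  exact (summable_mul_left_iff hx0').1 (by simpa only [norm_smul] using hx)

theorem mellinConvergent_tsum_mul_mulConvPow (hf : Measurable f) (hfs : MellinConvergent f s)
    (hc : Summable fun n => ‖c n‖ * (∫ x in Ioi (0 : ℝ), ‖(x : ℂ) ^ (s - 1) • f x‖) ^ (n + 1)) :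
    MellinConvergent (fun x => ∑' n, c n * mulConvPow f n x) s := by
  have := integrable_tsum_of_summable_integral_norm
    (fun n => mellinConvergent_const_mul_mulConvPow hf hfs (c n) n)
    (summable_integral_norm_cpow_smul_mul_mulConvPow hf hfs hc)
  simpa only [MellinConvergent, IntegrableOn, smul_eq_mul, tsum_mul_left] using this

theorem mellin_tsum_mul_mulConvPow (hf : Measurable f) (hfs : MellinConvergent f s)
    (hc : Summable fun n => ‖c n‖ * (∫ x in Ioi (0 : ℝ), ‖(x : ℂ) ^ (s - 1) • f x‖) ^ (n + 1)) :
    mellin (fun x => ∑' n, c n * mulConvPow f n x) s = ∑' n, c n * mellin f s ^ (n + 1) := by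
  calc mellin (fun x => ∑' n, c n * mulConvPow f n x) s
      = ∫ x in Ioi (0 : ℝ), ∑' n, (x : ℂ) ^ (s - 1) • (c n * mulConvPow f n x) := by
        simp only [mellin, smul_eq_mul, tsum_mul_left]
    _ = ∑' n, mellin (fun x => c n * mulConvPow f n x) s :=
        (integral_tsum_of_summable_integral_norm
          (fun n => mellinConvergent_const_mul_mulConvPow hf hfs (c n) n)
          (summable_integral_norm_cpow_smul_mul_mulConvPow hf hfs hc)).symm
    _ = ∑' n, c n * mellin f s ^ (n + 1) := by
        simp only [← smul_eq_mul (a := c _), mellin_const_smul, mellin_mulConvPow hf hfs]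

end ConvPowerSeries

/-- **Mellin transform of the convolution exponential.**
Let `σ = Re α` and `f : (0,∞) → ℂ` measurable with `x ↦ |f x| x^{σ-1}` integrable.
Then for a.e. `x > 0` the series `Σ_{n≥1} (-1)^{n-1} f^{∗n}(x)/n!` converges absolutely,
its sum `S` satisfies `x ↦ |S x| x^{σ-1}` integrable, and
`∫₀^∞ S(x) x^{α-1} dx = 1 - exp (-f̃(α))`. -/
theorem mellin_convolution_exponential (α : ℂ) (f : ℝ → ℂ) (hfm : Measurable f)
    (hf : IntegrableOn (fun x : ℝ => ‖f x‖ * x ^ (α.re - 1)) (Ioi 0)) :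
    (∀ᵐ x ∂(volume.restrict (Ioi (0 : ℝ))),
      Summable fun n : ℕ =>
        ‖(-1 : ℂ) ^ n * mulConvPow f n x / (Nat.factorial (n + 1) : ℂ)‖) ∧
    IntegrableOn
      (fun x : ℝ =>
        ‖∑' n : ℕ, (-1 : ℂ) ^ n * mulConvPow f n x / (Nat.factorial (n + 1) : ℂ)‖ *
          x ^ (α.re - 1)) (Ioi 0) ∧
    ∫ x in Ioi (0 : ℝ),
        (∑' n : ℕ, (-1 : ℂ) ^ n * mulConvPow f n x / (Nat.factorial (n + 1) : ℂ)) *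
          (x : ℂ) ^ (α - 1) =
      1 - Complex.exp (-∫ x in Ioi (0 : ℝ), f x * (x : ℂ) ^ (α - 1)) := by
  have hfs : MellinConvergent f α :=
    (mellin_convergent_iff_norm subset_rfl measurableSet_Ioi hfm.aestronglyMeasurable).2
      (by simpa only [mul_comm] using hf)
  set c : ℕ → ℂ := fun n => (-1) ^ n / ((n + 1).factorial : ℂ)
  set A := ∫ x in Ioi (0 : ℝ), ‖(x : ℂ) ^ (α - 1) • f x‖
  have hc : Summable fun n => ‖c n‖ * A ^ (n + 1) := by
    refine ((Real.summable_pow_div_factorial A).comp_injective Nat.succ_injective).congr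
      fun n => ?_
    simp only [Function.comp_apply, Nat.succ_eq_add_one, c, norm_div, norm_pow, norm_neg,
      norm_one, one_pow, Complex.norm_natCast]
    ring
  have hterm (n : ℕ) (x : ℝ) :
      (-1 : ℂ) ^ n * mulConvPow f n x / (Nat.factorial (n + 1) : ℂ) = c n * mulConvPow f n x :=
    mul_div_right_comm _ _ _
  simp only [hterm]
  refine ⟨ae_summable_norm_mul_mulConvPow hfm hfs hc,
    (mellinConvergent_tsum_mul_mulConvPow hfm hfs hc).integrableOn_norm_mul_rpow, ?_⟩
  rw [← mellin_eq_integral_mul_cpow, ← mellin_eq_integral_mul_cpow,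
    mellin_tsum_mul_mulConvPow hfm hfs hc]
  exact (hasSum_one_sub_exp_neg _).tsum_eq
end

section
/- Let 𝔄 be a unital C*-algebra and let b ∈ 𝔄 be a positive invertible element. Then for every real α > 0, the 𝔄-valued function t ↦ t^{α−1} · exp(−t b) is Bochner integrable on (0,∞) and ∫₀^∞ t^{α−1} exp(−t b) dt = Γ(α) · b^{−α}, where b^{−α} is the real power of b defined by the continuous functional calculus applied to x ↦ x^{−α} on the spectrum of b. -/
open MeasureTheory Set

/-!
Writing `exp (-t b) = cfc (x ↦ exp (-t x)) b`, the integrand is the continuous functional calculus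
applied to the scalar Gamma kernel `t ^ (α - 1) * exp (-t x)`. Since the spectrum of `b` is a
compact subset of `(0, ∞)`, it lies in `[ε, ∞)` for some `ε > 0`, so the kernel is dominated
uniformly on the spectrum by `t ^ (α - 1) * exp (-ε t)`. Integration therefore commutes with the
functional calculus, and the scalar identity `∫₀^∞ t ^ (α - 1) exp (-t x) dt = Γ(α) x ^ (-α)`
on the spectrum gives the result.
-/

lemma IsCompact.exists_pos_forall_le {s : Set ℝ} (hs : IsCompact s) (hpos : ∀ x ∈ s, 0 < x) :
    ∃ ε > 0, ∀ x ∈ s, ε ≤ x := by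
  rcases s.eq_empty_or_nonempty with rfl | hne
  · exact ⟨1, one_pos, by simp⟩
  · obtain ⟨m, hm, hmin⟩ := hs.exists_isMinOn hne continuousOn_id
    exact ⟨m, hpos m hm, hmin⟩

lemma Real.integral_rpow_sub_one_mul_exp_neg_mul_Ioi {α x : ℝ} (hα : 0 < α) (hx : 0 < x) :
    ∫ t in Ioi (0 : ℝ), t ^ (α - 1) * Real.exp (-(t * x)) = Real.Gamma α * x ^ (-α) := by
  simp_rw [mul_comm _ x]
  rw [Real.integral_rpow_mul_exp_neg_mul_Ioi hα hx, one_div, Real.inv_rpow hx.le,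
    Real.rpow_neg hx.le, mul_comm]

lemma continuousOn_rpow_mul_exp_neg_mul (c : ℝ) (s : Set ℝ) :
    ContinuousOn (Function.uncurry fun t x : ℝ => t ^ c * Real.exp (-(t * x))) (Ioi 0 ×ˢ s) := by
  refine ContinuousOn.mul ?_ (by fun_prop)
  exact continuous_fst.continuousOn.rpow_const fun p hp => Or.inl hp.1.ne'

lemma norm_rpow_mul_exp_neg_mul_le {c ε t x : ℝ} (ht : 0 < t) (hx : ε ≤ x) :
    ‖t ^ c * Real.exp (-(t * x))‖ ≤ t ^ c * Real.exp (-ε * t) := by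
  rw [Real.norm_of_nonneg (by positivity)]
  gcongr
  nlinarith

section

variable {A : Type*} [NormedRing A] [StarRing A] [NormedAlgebra ℝ A] [StarModule ℝ A]
  [ContinuousFunctionalCalculus ℝ A IsSelfAdjoint] {b : A}

lemma IsSelfAdjoint.cfc_exp_neg_mul (hb : IsSelfAdjoint b) (t : ℝ) :
    cfc (fun x => Real.exp (-(t * x))) b = NormedSpace.exp (-(t • b)) := by
  have htb : IsSelfAdjoint (t • b) := .smul (star_trivial t) hb
  rw [cfc_comp_const_mul t (fun x => Real.exp (-x)) b, cfc_comp_neg (a := t • b) (f := Real.exp),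
    CFC.real_exp_eq_normedSpace_exp htb.neg]

lemma IsSelfAdjoint.rpow_smul_exp_neg_smul_eq_cfc (hb : IsSelfAdjoint b) (c t : ℝ) :
    t ^ c • NormedSpace.exp (-(t • b)) = cfc (fun x => t ^ c * Real.exp (-(t * x))) b := by
  rw [cfc_const_mul _ _ b, hb.cfc_exp_neg_mul]

theorem IsSelfAdjoint.integrableOn_and_setIntegral_rpow_smul_exp_neg_smul [CompleteSpace A]
    (hb : IsSelfAdjoint b) (hspec : ∀ x ∈ spectrum ℝ b, 0 < x) {α : ℝ} (hα : 0 < α) :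
    IntegrableOn (fun t : ℝ => t ^ (α - 1) • NormedSpace.exp (-(t • b))) (Ioi 0) ∧
    ∫ t in Ioi (0 : ℝ), t ^ (α - 1) • NormedSpace.exp (-(t • b)) =
      Real.Gamma α • cfc (fun x : ℝ => x ^ (-α)) b := by
  obtain ⟨ε, hε, hεle⟩ := (spectrum.isCompact b).exists_pos_forall_le hspec
  simp_rw [hb.rpow_smul_exp_neg_smul_eq_cfc]
  have hcont := continuousOn_rpow_mul_exp_neg_mul (α - 1) (spectrum ℝ b)
  have hbound : ∀ᵐ t ∂(volume.restrict (Ioi (0 : ℝ))), ∀ x ∈ spectrum ℝ b,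
      ‖t ^ (α - 1) * Real.exp (-(t * x))‖ ≤ t ^ (α - 1) * Real.exp (-ε * t) :=
    ae_restrict_of_forall_mem measurableSet_Ioi fun t ht x hx =>
      norm_rpow_mul_exp_neg_mul_le ht (hεle x hx)
  have hint : IntegrableOn (fun t : ℝ => t ^ (α - 1) * Real.exp (-ε * t)) (Ioi 0) := by
    simpa using integrableOn_rpow_mul_exp_neg_mul_rpow (p := 1) (by linarith) one_pos hε
  refine ⟨integrableOn_cfc measurableSet_Ioi _ _ b hcont hbound hint.hasFiniteIntegral hb, ?_⟩
  rw [← cfc_setIntegral measurableSet_Ioi _ _ b hcont hbound hint.hasFiniteIntegral hb,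
    ← cfc_const_mul _ _ b (fun x hx => (Real.continuousAt_rpow_const x (-α)
      (Or.inl (hspec x hx).ne')).continuousWithinAt)]
  refine cfc_congr fun x hx => ?_
  exact Real.integral_rpow_sub_one_mul_exp_neg_mul_Ioi hα (hspec x hx)

end

/-- **Mellin representation of real powers in a C*-algebra.**
Let `𝔄` be a unital C*-algebra and `b ∈ 𝔄` positive and invertible. For every real `α > 0`,
`t ↦ t^{α-1} exp (-t b)` is Bochner integrable on `(0,∞)` and
`∫₀^∞ t^{α-1} exp (-t b) dt = Γ(α) b^{-α}`, where `b^{-α}` is given by the continuous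
functional calculus applied to `x ↦ x^{-α}`. -/
theorem cstar_mellin_exp_eq_Gamma_smul_rpow {A : Type*} [CStarAlgebra A]
    [PartialOrder A] [StarOrderedRing A]
    (b : A) (hb : 0 ≤ b) (hbu : IsUnit b) (α : ℝ) (hα : 0 < α) :
    IntegrableOn (fun t : ℝ => t ^ (α - 1) • NormedSpace.exp (-(t • b))) (Ioi 0) ∧
    ∫ t in Ioi (0 : ℝ), t ^ (α - 1) • NormedSpace.exp (-(t • b)) =
      Real.Gamma α • cfc (fun x : ℝ => x ^ (-α)) b :=
  hb.isSelfAdjoint.integrableOn_and_setIntegral_rpow_smul_exp_neg_smul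
    (fun _ hx => (hbu.isStrictlyPositive hb).spectrum_pos hx) hα
end

section
/- Let f : (0,∞) → ℂ be measurable, let c ∈ ℂ, ε ∈ ℝ, k ∈ ℕ, and let M, b ∈ ℝ with ε < M and −ε < b. Assume: (i) x ↦ (f(x) − c x^{ε} (log x)^k) x^{σ−1} is integrable on (0,1] for every σ > −M; (ii) x ↦ f(x) x^{σ−1} is integrable on [1,∞) for every σ < b. Then the Mellin transform f̃(α) = ∫₀^∞ f(x) x^{α−1} dx, which exists for −ε < Re α < b, continues meromorphically to the strip −M < Re α < b with a single pole at α = −ε: there exists a holomorphic function h on {α : −M < Re α < b} such that f̃(α) = h(α) + c (−1)^k k! / (α + ε)^{k+1} for all α with −ε < Re α < b. -/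
/-!
Split the Mellin integral at `x = 1`. On `[1, ∞)` it converges and is holomorphic for
`Re α < b`. On `(0, 1]` subtract the singular term `c x^ε (log x)^k`: the remainder contributes a
function holomorphic for `Re α > -M`, while the singular term integrates in closed form to
`c (-1)^k k! / (α + ε)^{k+1}`, obtained from `∫₀¹ x^{s-1} dx = 1/s` by differentiating `k` times
in `s`.

Holomorphy of `s ↦ ∫ F(x) x^{s-1} dμ` in a strip where the integrals converge at the edges is
differentiation under the integral sign: for `x > 0` and `σ₁ + δ ≤ t ≤ σ₂ - δ`, the elementary
bound `|log x| ≤ (x^δ + x^{-δ}) / δ` gives `|log x| x^t ≤ (2/δ) (x^{σ₁} + x^{σ₂})`.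
-/

open MeasureTheory Set

namespace Real

lemma abs_log_le_rpow_add_rpow_neg_div {x δ : ℝ} (hx : 0 < x) (hδ : 0 < δ) :
    |log x| ≤ (x ^ δ + x ^ (-δ)) / δ := by
  have h₁ := log_le_rpow_div hx.le hδ
  have h₂ := log_le_rpow_div (inv_pos.2 hx).le hδ
  rw [log_inv, inv_rpow hx.le, ← rpow_neg hx.le] at h₂
  have h₃ : 0 ≤ x ^ δ / δ := by positivity
  have h₄ : 0 ≤ x ^ (-δ) / δ := by positivity
  rw [add_div, abs_le]
  constructor <;> linarith

lemma rpow_le_rpow_add_rpow {x a t c : ℝ} (hx : 0 < x) (hat : a ≤ t) (htc : t ≤ c) :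
    x ^ t ≤ x ^ a + x ^ c := by
  rcases le_total 1 x with h | h
  · linarith [rpow_le_rpow_of_exponent_le h htc, rpow_nonneg hx.le a]
  · linarith [rpow_le_rpow_of_exponent_ge hx h hat, rpow_nonneg hx.le c]

lemma abs_log_mul_rpow_le {x δ t a c : ℝ} (hx : 0 < x) (hδ : 0 < δ) (ha : a + δ ≤ t)
    (hc : t + δ ≤ c) : |log x| * x ^ t ≤ 2 / δ * (x ^ a + x ^ c) := by
  have e₁ := rpow_le_rpow_add_rpow hx (a := a) (t := t + δ) (by linarith) hc
  have e₂ := rpow_le_rpow_add_rpow hx (a := a) (t := t + -δ) (c := c) (by linarith) (by linarith)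
  calc |log x| * x ^ t ≤ (x ^ δ + x ^ (-δ)) / δ * x ^ t := by
        gcongr; exact abs_log_le_rpow_add_rpow_neg_div hx hδ
    _ = (x ^ (t + δ) + x ^ (t + -δ)) / δ := by rw [rpow_add hx, rpow_add hx]; ring
    _ ≤ 2 * (x ^ a + x ^ c) / δ := by gcongr; linarith
    _ = 2 / δ * (x ^ a + x ^ c) := by ring

end Real

namespace Complex

lemma norm_mul_ofReal_cpow_sub_one {x : ℝ} (hx : 0 < x) (w s : ℂ) :
    ‖w * (x : ℂ) ^ (s - 1)‖ = ‖w‖ * x ^ (s.re - 1) := by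
  rw [norm_mul, norm_cpow_eq_rpow_re_of_pos hx, sub_re, one_re]

end Complex

open Complex

section ParametricMellin

variable {μ : Measure ℝ} {F : ℝ → ℂ}

lemma aestronglyMeasurable_mul_cpow_sub_one (hF : AEStronglyMeasurable F μ) (s : ℂ) :
    AEStronglyMeasurable (fun x : ℝ => F x * (x : ℂ) ^ (s - 1)) μ :=
  hF.mul (measurable_ofReal.pow_const _).aestronglyMeasurable

variable (hμ : ∀ᵐ x ∂μ, 0 < x) (hF : AEStronglyMeasurable F μ) {σ₁ σ₂ : ℝ}
  (h₁ : Integrable (fun x : ℝ => F x * (x : ℂ) ^ ((σ₁ : ℂ) - 1)) μ)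
  (h₂ : Integrable (fun x : ℝ => F x * (x : ℂ) ^ ((σ₂ : ℂ) - 1)) μ)
include hμ hF h₁ h₂

lemma integrable_mul_cpow_of_re_mem_Icc {s : ℂ} (hs : s.re ∈ Icc σ₁ σ₂) :
    Integrable (fun x : ℝ => F x * (x : ℂ) ^ (s - 1)) μ := by
  refine (h₁.norm.add h₂.norm).mono' (aestronglyMeasurable_mul_cpow_sub_one hF s) ?_
  filter_upwards [hμ] with x hx
  simp only [Pi.add_apply, norm_mul_ofReal_cpow_sub_one hx, ofReal_re, ← mul_add]
  exact mul_le_mul_of_nonneg_left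
    (Real.rpow_le_rpow_add_rpow hx (by linarith [hs.1]) (by linarith [hs.2])) (norm_nonneg _)

lemma hasDerivAt_integral_mul_cpow_sub_one {s : ℂ} (hs : s.re ∈ Ioo σ₁ σ₂) :
    Integrable (fun x : ℝ => F x * (x : ℂ) ^ (s - 1) * Real.log x) μ ∧
      HasDerivAt (fun z : ℂ => ∫ x, F x * (x : ℂ) ^ (z - 1) ∂μ)
        (∫ x, F x * (x : ℂ) ^ (s - 1) * Real.log x ∂μ) s := by
  obtain ⟨hσ₁, hσ₂⟩ := hs
  obtain ⟨δ, hδ, hδ₁, hδ₂⟩ : ∃ δ > 0, σ₁ + 2 * δ ≤ s.re ∧ s.re + 2 * δ ≤ σ₂ :=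
    ⟨min (s.re - σ₁) (σ₂ - s.re) / 2, half_pos (lt_min (by linarith) (by linarith)),
      by linarith [min_le_left (s.re - σ₁) (σ₂ - s.re)],
      by linarith [min_le_right (s.re - σ₁) (σ₂ - s.re)]⟩
  have hre : ∀ z ∈ Metric.ball s δ, σ₁ + δ ≤ z.re ∧ z.re + δ ≤ σ₂ := by
    intro z hz
    have hz' := (abs_re_le_norm (z - s)).trans_lt (mem_ball_iff_norm.1 hz)
    rw [sub_re, abs_lt] at hz'
    constructor <;> linarith
  refine hasDerivAt_integral_of_dominated_loc_of_deriv_le (Metric.ball_mem_nhds s hδ)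
    (.of_forall (aestronglyMeasurable_mul_cpow_sub_one hF))
    (integrable_mul_cpow_of_re_mem_Icc hμ hF h₁ h₂ ⟨hσ₁.le, hσ₂.le⟩)
    ((aestronglyMeasurable_mul_cpow_sub_one hF s).mul
      (measurable_ofReal.comp Real.measurable_log).aestronglyMeasurable)
    (F' := fun z x => F x * (x : ℂ) ^ (z - 1) * Real.log x)
    (bound := fun x => 2 / δ * (‖F x * (x : ℂ) ^ ((σ₁ : ℂ) - 1)‖ +
      ‖F x * (x : ℂ) ^ ((σ₂ : ℂ) - 1)‖)) ?_ ((h₁.norm.add h₂.norm).const_mul _) ?_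
  · filter_upwards [hμ] with x hx z hz
    obtain ⟨hz₁, hz₂⟩ := hre z hz
    simp only [norm_mul (_ * _), norm_mul_ofReal_cpow_sub_one hx, norm_real, Real.norm_eq_abs,
      ofReal_re]
    calc ‖F x‖ * x ^ (z.re - 1) * |Real.log x|
        = ‖F x‖ * (|Real.log x| * x ^ (z.re - 1)) := by ring
      _ ≤ ‖F x‖ * (2 / δ * (x ^ (σ₁ - 1) + x ^ (σ₂ - 1))) := by
        refine mul_le_mul_of_nonneg_left ?_ (norm_nonneg _)
        exact Real.abs_log_mul_rpow_le hx hδ (by linarith) (by linarith)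
      _ = 2 / δ * (‖F x‖ * x ^ (σ₁ - 1) + ‖F x‖ * x ^ (σ₂ - 1)) := by ring
  · filter_upwards [hμ] with x hx z _
    have := (((hasDerivAt_id z).sub_const 1).const_cpow
      (Or.inl (ofReal_ne_zero.2 hx.ne'))).const_mul (F x)
    rw [← ofReal_log hx.le] at this
    exact this.congr_deriv (by simp only [id, mul_one, mul_assoc])

end ParametricMellin

lemma differentiableOn_integral_mul_cpow_sub_one {μ : Measure ℝ} {F : ℝ → ℂ}
    (hμ : ∀ᵐ x ∂μ, 0 < x) (hF : AEStronglyMeasurable F μ) {I : Set ℝ} (hI : IsOpen I)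
    (hint : ∀ σ ∈ I, Integrable (fun x : ℝ => F x * (x : ℂ) ^ ((σ : ℂ) - 1)) μ) :
    DifferentiableOn ℂ (fun s : ℂ => ∫ x, F x * (x : ℂ) ^ (s - 1) ∂μ) (re ⁻¹' I) := by
  intro s hs
  obtain ⟨r, hr, hball⟩ := Metric.isOpen_iff.1 hI _ hs
  rw [Real.ball_eq_Ioo] at hball
  have h₁ := hint _ (hball ⟨by linarith, by linarith⟩ : s.re - r / 2 ∈ I)
  have h₂ := hint _ (hball ⟨by linarith, by linarith⟩ : s.re + r / 2 ∈ I)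
  exact (hasDerivAt_integral_mul_cpow_sub_one hμ hF h₁ h₂
    ⟨by linarith, by linarith⟩).2.differentiableAt.differentiableWithinAt

lemma ae_restrict_Ioc_zero_pos (a : ℝ) : ∀ᵐ x ∂(volume.restrict (Ioc 0 a)), 0 < x :=
  ae_restrict_of_forall_mem measurableSet_Ioc fun _ hx => hx.1

lemma integrableOn_log_pow_mul_cpow_Ioc (k : ℕ) {s : ℂ} (hs : 0 < s.re) :
    IntegrableOn (fun x : ℝ => (Real.log x : ℂ) ^ k * (x : ℂ) ^ (s - 1)) (Ioc 0 1) := by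
  induction k generalizing s with
  | zero =>
    simpa [← intervalIntegrable_iff_integrableOn_Ioc_of_le zero_le_one] using
      intervalIntegral.intervalIntegrable_cpow' (r := s - 1) (by simpa using hs)
  | succ k ih =>
    have := (hasDerivAt_integral_mul_cpow_sub_one (s := s) (ae_restrict_Ioc_zero_pos 1)
      (by fun_prop) (ih (s := ((s.re / 2 : ℝ) : ℂ)) (by simpa using hs))
      (ih (s := ((s.re + 1 : ℝ) : ℂ)) (by rw [ofReal_re]; linarith)) ⟨by linarith, by linarith⟩).1
    exact this.congr (ae_of_all _ fun x => by ring)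

lemma integral_log_pow_mul_cpow_Ioc (k : ℕ) {s : ℂ} (hs : 0 < s.re) :
    ∫ x in Ioc 0 1, (Real.log x : ℂ) ^ k * (x : ℂ) ^ (s - 1) =
      (-1) ^ k * (Nat.factorial k : ℂ) / s ^ (k + 1) := by
  induction k generalizing s with
  | zero =>
    rw [← intervalIntegral.integral_of_le zero_le_one]
    simp [integral_cpow (Or.inl (by simpa using hs : -1 < (s - 1).re)),
      zero_cpow (ne_zero_of_re_pos hs)]
  | succ k ih =>
    have hs' := ne_zero_of_re_pos hs
    have hderiv := (hasDerivAt_integral_mul_cpow_sub_one (s := s) (ae_restrict_Ioc_zero_pos 1)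
      (by fun_prop) (integrableOn_log_pow_mul_cpow_Ioc k (s := ((s.re / 2 : ℝ) : ℂ))
        (by simpa using hs))
      (integrableOn_log_pow_mul_cpow_Ioc k (s := ((s.re + 1 : ℝ) : ℂ))
        (by rw [ofReal_re]; linarith))
      ⟨by linarith, by linarith⟩).2
    have hclosed : HasDerivAt (fun z : ℂ => (-1) ^ k * (Nat.factorial k : ℂ) * (z ^ (k + 1))⁻¹)
        ((-1) ^ (k + 1) * (Nat.factorial (k + 1) : ℂ) / s ^ (k + 2)) s := by
      refine (((hasDerivAt_pow (k + 1) s).inv (pow_ne_zero _ hs')).const_mul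
        ((-1) ^ k * (Nat.factorial k : ℂ))).congr_deriv ?_
      rw [Nat.factorial_succ, Nat.add_sub_cancel]
      push_cast
      field_simp
      ring
    have heq : (fun z : ℂ => ∫ x in Ioc 0 1, (Real.log x : ℂ) ^ k * (x : ℂ) ^ (z - 1))
        =ᶠ[nhds s] fun z => (-1) ^ k * (Nat.factorial k : ℂ) * (z ^ (k + 1))⁻¹ :=
      ((isOpen_lt continuous_const continuous_re).eventually_mem hs).mono fun z hz =>
        (ih hz).trans (div_eq_mul_inv _ _)
    rw [← (heq.hasDerivAt_iff.1 hderiv).unique hclosed]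
    exact integral_congr_ae (ae_of_all _ fun x => by ring)

lemma eqOn_const_mul_cpow_mul_log_pow_mul_cpow (c a : ℂ) (k : ℕ) (s : ℂ) :
    EqOn (fun x : ℝ => c * ((Real.log x : ℂ) ^ k * (x : ℂ) ^ (s + a - 1)))
      (fun x : ℝ => c * (x : ℂ) ^ a * (Real.log x : ℂ) ^ k * (x : ℂ) ^ (s - 1)) (Ioi 0) :=
  fun x hx => by
    dsimp only
    rw [show s + a - 1 = s - 1 + a by ring, cpow_add _ _ (ofReal_ne_zero.2 (ne_of_gt hx))]
    ring

lemma integrableOn_cpow_mul_log_pow_mul_cpow_Ioc (c a : ℂ) (k : ℕ) {s : ℂ}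
    (hs : 0 < (s + a).re) :
    IntegrableOn (fun x : ℝ => c * (x : ℂ) ^ a * (Real.log x : ℂ) ^ k * (x : ℂ) ^ (s - 1))
      (Ioc 0 1) :=
  IntegrableOn.congr_fun ((integrableOn_log_pow_mul_cpow_Ioc k hs).const_mul c)
    ((eqOn_const_mul_cpow_mul_log_pow_mul_cpow c a k s).mono Ioc_subset_Ioi_self)
    measurableSet_Ioc

lemma integral_cpow_mul_log_pow_mul_cpow_Ioc (c a : ℂ) (k : ℕ) {s : ℂ} (hs : 0 < (s + a).re) :
    ∫ x in Ioc (0 : ℝ) 1, c * (x : ℂ) ^ a * (Real.log x : ℂ) ^ k * (x : ℂ) ^ (s - 1) =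
      c * (-1) ^ k * (Nat.factorial k : ℂ) / (s + a) ^ (k + 1) := by
  rw [← setIntegral_congr_fun measurableSet_Ioc
    ((eqOn_const_mul_cpow_mul_log_pow_mul_cpow c a k s).mono Ioc_subset_Ioi_self),
    integral_const_mul, integral_log_pow_mul_cpow_Ioc k hs]
  ring

section SingularPart

variable {F : ℝ → ℂ} {c a s : ℂ} {k : ℕ}
  (hF : IntegrableOn
    (fun x : ℝ => (F x - c * (x : ℂ) ^ a * (Real.log x : ℂ) ^ k) * (x : ℂ) ^ (s - 1)) (Ioc 0 1))
  (hs : 0 < (s + a).re)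
include hF hs

lemma integrableOn_Ioc_mul_cpow_of_sub_singular :
    IntegrableOn (fun x : ℝ => F x * (x : ℂ) ^ (s - 1)) (Ioc 0 1) :=
  (hF.add (integrableOn_cpow_mul_log_pow_mul_cpow_Ioc c a k hs)).congr
    (ae_of_all _ fun x => by simp only [Pi.add_apply]; ring)

lemma integral_Ioc_mul_cpow_eq_sub_singular_add :
    ∫ x in Ioc (0 : ℝ) 1, F x * (x : ℂ) ^ (s - 1) =
      (∫ x in Ioc (0 : ℝ) 1,
        (F x - c * (x : ℂ) ^ a * (Real.log x : ℂ) ^ k) * (x : ℂ) ^ (s - 1)) +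
      c * (-1) ^ k * (Nat.factorial k : ℂ) / (s + a) ^ (k + 1) := by
  rw [← integral_cpow_mul_log_pow_mul_cpow_Ioc c a k hs,
    ← integral_add hF (integrableOn_cpow_mul_log_pow_mul_cpow_Ioc c a k hs)]
  exact integral_congr_ae (ae_of_all _ fun x => by ring)

end SingularPart

theorem mellin_meromorphic_continuation_general (f : ℝ → ℂ) (hfm : Measurable f)
    (c : ℂ) (ε : ℝ) (k : ℕ) (M b : ℝ) (hεM : ε < M)
    (h0 : ∀ σ : ℝ, -M < σ →
      IntegrableOn
        (fun x : ℝ =>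
          (f x - c * (x : ℂ) ^ (ε : ℂ) * ((Real.log x : ℂ)) ^ k) * (x : ℂ) ^ ((σ : ℂ) - 1))
        (Ioc 0 1))
    (hinf : ∀ σ : ℝ, σ < b →
      IntegrableOn (fun x : ℝ => f x * (x : ℂ) ^ ((σ : ℂ) - 1)) (Ici 1)) :
    (∀ α : ℂ, -ε < α.re → α.re < b →
      IntegrableOn (fun x : ℝ => f x * (x : ℂ) ^ (α - 1)) (Ioi 0)) ∧
    ∃ h : ℂ → ℂ, DifferentiableOn ℂ h {α : ℂ | -M < α.re ∧ α.re < b} ∧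
      ∀ α : ℂ, -ε < α.re → α.re < b →
        ∫ x in Ioi (0 : ℝ), f x * (x : ℂ) ^ (α - 1) =
          h α + c * (-1) ^ k * (Nat.factorial k : ℂ) / (α + (ε : ℂ)) ^ (k + 1) := by
  set p : ℝ → ℂ := fun x => c * (x : ℂ) ^ (ε : ℂ) * (Real.log x : ℂ) ^ k
  have hpos : ∀ᵐ x : ℝ ∂(volume.restrict (Ioi 1)), 0 < x :=
    ae_restrict_of_forall_mem measurableSet_Ioi fun _ hx => zero_lt_one.trans hx
  have hrem_meas : AEStronglyMeasurable (fun x => f x - p x) (volume.restrict (Ioc 0 1)) := by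
    fun_prop
  have hinf_Ioi : ∀ σ ∈ Iio b, IntegrableOn (fun x => f x * (x : ℂ) ^ ((σ : ℂ) - 1)) (Ioi 1) :=
    fun σ hσ => (hinf σ hσ).mono_set Ioi_subset_Ici_self
  have hrem_Ioc : ∀ α : ℂ, -ε < α.re →
      IntegrableOn (fun x => (f x - p x) * (x : ℂ) ^ (α - 1)) (Ioc 0 1) := fun α hα =>
    integrable_mul_cpow_of_re_mem_Icc (ae_restrict_Ioc_zero_pos 1) hrem_meas (h0 _ (by linarith))
      (h0 _ (by linarith)) ⟨le_rfl, le_rfl⟩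
  have hf_Ioi : ∀ α : ℂ, α.re < b → IntegrableOn (fun x => f x * (x : ℂ) ^ (α - 1)) (Ioi 1) :=
    fun α hα => integrable_mul_cpow_of_re_mem_Icc hpos hfm.aestronglyMeasurable
      (hinf_Ioi _ hα) (hinf_Ioi _ hα) ⟨le_rfl, le_rfl⟩
  have hpole : ∀ α : ℂ, -ε < α.re → 0 < (α + ε).re := fun α hα => by
    rw [add_re, ofReal_re]; linarith
  refine ⟨fun α h₁ h₂ => ?_, fun α => (∫ x in Ioc 0 1, (f x - p x) * (x : ℂ) ^ (α - 1)) +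
      ∫ x in Ioi 1, f x * (x : ℂ) ^ (α - 1), ?_, fun α h₁ h₂ => ?_⟩
  · rw [← Ioc_union_Ioi_eq_Ioi zero_le_one]
    exact (integrableOn_Ioc_mul_cpow_of_sub_singular (hrem_Ioc α h₁) (hpole α h₁)).union
      (hf_Ioi α h₂)
  · exact ((differentiableOn_integral_mul_cpow_sub_one (ae_restrict_Ioc_zero_pos 1) hrem_meas
      isOpen_Ioi h0).mono fun α hα => hα.1).add
      ((differentiableOn_integral_mul_cpow_sub_one hpos hfm.aestronglyMeasurable isOpen_Iio
        hinf_Ioi).mono fun α hα => hα.2)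
  · rw [← Ioc_union_Ioi_eq_Ioi zero_le_one, setIntegral_union Ioc_disjoint_Ioi_same
      measurableSet_Ioi (integrableOn_Ioc_mul_cpow_of_sub_singular (hrem_Ioc α h₁) (hpole α h₁))
      (hf_Ioi α h₂), integral_Ioc_mul_cpow_eq_sub_singular_add (hrem_Ioc α h₁) (hpole α h₁),
      add_right_comm]

/-- **Meromorphic continuation of a Mellin transform from an asymptotic expansion at 0.**
Let `f : (0,∞) → ℂ` be measurable, `c ∈ ℂ`, `ε ∈ ℝ`, `k ∈ ℕ`, and `M, b ∈ ℝ` with `ε < M`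
and `-ε < b`. Assume `x ↦ (f x - c x^ε (log x)^k) x^{σ-1}` is integrable on `(0,1]` for all
`σ > -M` and `x ↦ f x · x^{σ-1}` is integrable on `[1,∞)` for all `σ < b`. Then the Mellin
transform `f̃(α) = ∫₀^∞ f(x) x^{α-1} dx` exists for `-ε < Re α < b` and continues
meromorphically to `-M < Re α < b` with a single pole at `α = -ε`: there is a holomorphic
`h` on the strip `-M < Re α < b` with
`f̃(α) = h(α) + c (-1)^k k! / (α + ε)^{k+1}` for `-ε < Re α < b`. -/
theorem mellin_meromorphic_continuation (f : ℝ → ℂ) (hfm : Measurable f)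
    (c : ℂ) (ε : ℝ) (k : ℕ) (M b : ℝ) (hεM : ε < M) (hεb : -ε < b)
    (h0 : ∀ σ : ℝ, -M < σ →
      IntegrableOn
        (fun x : ℝ =>
          (f x - c * (x : ℂ) ^ (ε : ℂ) * ((Real.log x : ℂ)) ^ k) * (x : ℂ) ^ ((σ : ℂ) - 1))
        (Ioc 0 1))
    (hinf : ∀ σ : ℝ, σ < b →
      IntegrableOn (fun x : ℝ => f x * (x : ℂ) ^ ((σ : ℂ) - 1)) (Ici 1)) :
    (∀ α : ℂ, -ε < α.re → α.re < b →
      IntegrableOn (fun x : ℝ => f x * (x : ℂ) ^ (α - 1)) (Ioi 0)) ∧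
    ∃ h : ℂ → ℂ, DifferentiableOn ℂ h {α : ℂ | -M < α.re ∧ α.re < b} ∧
      ∀ α : ℂ, -ε < α.re → α.re < b →
        ∫ x in Ioi (0 : ℝ), f x * (x : ℂ) ^ (α - 1) =
          h α + c * (-1) ^ k * (Nat.factorial k : ℂ) / (α + (ε : ℂ)) ^ (k + 1) :=
  mellin_meromorphic_continuation_general f hfm c ε k M b hεM h0 hinf
end
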